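/- Let $N, D$ be natural numbers with $1 \le D < N$, let $L^+, L^- > 0$, let $k^+ > 0$ and $k^- < 0$ with $\frac{|k^-|}{k^+} \ne \frac{D}{L^+} \cdot \frac{L^-}{N-D}$. Set $L_j = L^+$ and $k_j = k^+$ for $1 \le j \le D$, and $L_j = L^-$ and $k_j = k^-$ for $D+1 \le j \le N$. Then for every tuple of continuous functions $f_j : [0,L_j] \to \mathbb{R}$ there exists a unique tuple $(\psi_1,\dots,\psi_N)$ of twice continuously differentiable functions $\psi_j : [0,L_j] \to \mathbb{R}$ satisfying $-k_j \psi_j'' = f_j$ on $[0,L_j]$ for all $j$, $\psi_j(0) = 0$ for all $j$, $\psi_1(L_1) = \cdots = \psi_N(L_N)$, and $\sum_{j=1}^{N} k_j \psi_j'(L_j) = 0$. -/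

import Mathlib

/-!
On edge `j` the equation `-k_j ψ_j'' = f_j` with `ψ_j 0 = 0` leaves one free slope `c_j`, so
`ψ_j x = c_j x + P_j x` for a fixed particular solution `P_j`. Continuity at the internal vertex
says that every `c_j L_j + P_j (L_j)` equals one common value `V`, and Kirchhoff's law then
becomes a single linear equation `V ∑ k_j / L_j = (data)`. Hence the problem is well posed as
soon as `∑ k_j / L_j ≠ 0`; for the two-phase network this sum is `D k⁺ / L⁺ + (N - D) k⁻ / L⁻`,
which vanishes exactly when `|k⁻| / k⁺ = (D / L⁺) (L⁻ / (N - D))`.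
-/

/-- The predicate saying that `ψ = (ψ_1, …, ψ_N)` is a classical solution of the
star-network problem with `N` edges, edge `j` of length `L j` and conductivity `k j`,
source terms `f j`, Dirichlet conditions at the external vertices `x = 0`,
and continuity plus Kirchhoff conditions at the internal vertex (`x = L j` on edge `j`). -/
def IsStarSolutionVar (N : ℕ) (L : ℕ → ℝ) (k : ℕ → ℝ) (f : ℕ → ℝ → ℝ)
    (ψ : ℕ → ℝ → ℝ) : Prop :=
  (∀ j ∈ Finset.Icc 1 N, ContDiffOn ℝ 2 (ψ j) (Set.Icc 0 (L j))) ∧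
  (∀ j ∈ Finset.Icc 1 N, ∀ x ∈ Set.Icc 0 (L j),
      -(k j * iteratedDerivWithin 2 (ψ j) (Set.Icc 0 (L j)) x) = f j x) ∧
  (∀ j ∈ Finset.Icc 1 N, ψ j 0 = 0) ∧
  (∀ j ∈ Finset.Icc 1 N, ψ j (L j) = ψ 1 (L 1)) ∧
  (∑ j ∈ Finset.Icc 1 N, k j * derivWithin (ψ j) (Set.Icc 0 (L j)) (L j) = 0)

open Set

theorem ContinuousOn.continuous_comp_max_min {α β : Type*} [LinearOrder α] [TopologicalSpace α]
    [OrderClosedTopology α] [TopologicalSpace β] {f : α → β} {a b : α} (hab : a ≤ b)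
    (hf : ContinuousOn f (Icc a b)) : Continuous fun x => f (max a (min b x)) :=
  hf.comp_continuous (by fun_prop) fun x => ⟨le_max_left _ _, max_le hab (min_le_left _ _)⟩

noncomputable def shootingSolution (g : ℝ → ℝ) (c x : ℝ) : ℝ :=
  c * x + ∫ t in 0..x, ∫ s in 0..t, g s

section shootingSolution

variable {g : ℝ → ℝ} (c : ℝ)

@[simp]
theorem shootingSolution_zero : shootingSolution g c 0 = 0 := by
  simp [shootingSolution]

theorem hasDerivAt_shootingSolution (hg : Continuous g) (x : ℝ) :
    HasDerivAt (shootingSolution g c) (c + ∫ s in 0..x, g s) x := by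
  have hG : Continuous fun t => ∫ s in 0..t, g s :=
    continuous_iff_continuousAt.2 fun t =>
      (hg.integral_hasStrictDerivAt 0 t).hasDerivAt.continuousAt
  have hcx : HasDerivAt (c * ·) c x := by simpa using (hasDerivAt_id x).const_mul c
  exact hcx.add (hG.integral_hasStrictDerivAt 0 x).hasDerivAt

theorem deriv_shootingSolution (hg : Continuous g) :
    deriv (shootingSolution g c) = fun x => c + ∫ s in 0..x, g s :=
  funext fun x => (hasDerivAt_shootingSolution c hg x).deriv

theorem contDiff_shootingSolution (hg : Continuous g) : ContDiff ℝ 2 (shootingSolution g c) := by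
  have hd : ∀ x, HasDerivAt (fun x => c + ∫ s in 0..x, g s) (g x) x := fun x =>
    (hg.integral_hasStrictDerivAt 0 x).hasDerivAt.const_add c
  rw [show (2 : WithTop ℕ∞) = 1 + 1 from rfl, contDiff_succ_iff_deriv,
    deriv_shootingSolution c hg, contDiff_one_iff_deriv]
  refine ⟨fun x => (hasDerivAt_shootingSolution c hg x).differentiableAt, by simp,
    fun x => (hd x).differentiableAt, ?_⟩
  rwa [funext fun x => (hd x).deriv]

theorem iteratedDeriv_two_shootingSolution (hg : Continuous g) :
    iteratedDeriv 2 (shootingSolution g c) = g := by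
  rw [iteratedDeriv_succ, iteratedDeriv_one, deriv_shootingSolution c hg]
  exact funext fun x => ((hg.integral_hasStrictDerivAt 0 x).hasDerivAt.const_add c).deriv

variable {b x : ℝ}

theorem derivWithin_Icc_shootingSolution (hg : Continuous g) (hb : 0 < b) (hx : x ∈ Icc 0 b) :
    derivWithin (shootingSolution g c) (Icc 0 b) x = c + ∫ s in 0..x, g s :=
  (hasDerivAt_shootingSolution c hg x).hasDerivWithinAt.derivWithin (uniqueDiffOn_Icc hb x hx)

theorem iteratedDerivWithin_Icc_two_shootingSolution (hg : Continuous g) (hb : 0 < b)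
    (hx : x ∈ Icc 0 b) : iteratedDerivWithin 2 (shootingSolution g c) (Icc 0 b) x = g x := by
  rw [iteratedDerivWithin_eq_iteratedDeriv (uniqueDiffOn_Icc hb)
    (contDiff_shootingSolution c hg).contDiffAt hx, iteratedDeriv_two_shootingSolution c hg]

end shootingSolution

theorem eqOn_linear_of_iteratedDerivWithin_two_eq_zero {w : ℝ → ℝ} {b : ℝ} (hb : 0 < b)
    (hw : ContDiffOn ℝ 2 w (Icc 0 b))
    (hw₂ : ∀ x ∈ Icc 0 b, iteratedDerivWithin 2 w (Icc 0 b) x = 0) (hw₀ : w 0 = 0) :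
    ∀ x ∈ Icc 0 b, derivWithin w (Icc 0 b) x = w b / b ∧ w x = w b / b * x := by
  have hs := uniqueDiffOn_Icc hb
  set c := derivWithin w (Icc 0 b) 0
  have hw' : ∀ x ∈ Icc 0 b, derivWithin w (Icc 0 b) x = c := by
    refine constant_of_derivWithin_zero
      ((hw.derivWithin hs le_rfl).differentiableOn one_ne_zero) fun x hx => ?_
    have h := hw₂ x (Ico_subset_Icc_self hx)
    rwa [iteratedDerivWithin_eq_iterate] at h
  have hlin : ∀ x ∈ Icc 0 b, w x = c * x := by
    have hcx : ∀ x ∈ Icc 0 b, derivWithin (c * ·) (Icc 0 b) x = c := fun x hx => by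
      simpa using ((hasDerivAt_id x).const_mul c).hasDerivWithinAt.derivWithin (hs x hx)
    refine eq_of_derivWithin_eq (hw.differentiableOn two_ne_zero) (by fun_prop)
      (fun x hx => ?_) (by simp [hw₀])
    rw [hw' x (Ico_subset_Icc_self hx), hcx x (Ico_subset_Icc_self hx)]
  have hc : c = w b / b := by
    rw [hlin b (right_mem_Icc.2 hb.le), mul_div_cancel_right₀ _ hb.ne']
  exact fun x hx => ⟨hc ▸ hw' x hx, hc ▸ hlin x hx⟩

namespace IsStarSolutionVar

variable {N : ℕ} {L k : ℕ → ℝ} {f g : ℕ → ℝ → ℝ} {φ ψ : ℕ → ℝ → ℝ}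

theorem sub (hL : ∀ j ∈ Finset.Icc 1 N, 0 < L j) (hφ : IsStarSolutionVar N L k f φ)
    (hψ : IsStarSolutionVar N L k g ψ) : IsStarSolutionVar N L k (f - g) (φ - ψ) := by
  obtain ⟨hφ₂, hφeq, hφ₀, hφL, hφK⟩ := hφ
  obtain ⟨hψ₂, hψeq, hψ₀, hψL, hψK⟩ := hψ
  refine ⟨fun j hj => (hφ₂ j hj).sub (hψ₂ j hj), fun j hj x hx => ?_,
    fun j hj => by simp [hφ₀ j hj, hψ₀ j hj], fun j hj => by simp [hφL j hj, hψL j hj], ?_⟩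
  · rw [Pi.sub_apply, iteratedDerivWithin_sub hx (uniqueDiffOn_Icc (hL j hj))
      ((hφ₂ j hj).contDiffWithinAt hx) ((hψ₂ j hj).contDiffWithinAt hx), Pi.sub_apply,
      Pi.sub_apply, ← hφeq j hj x hx, ← hψeq j hj x hx]
    ring
  · have hmem : ∀ j ∈ Finset.Icc 1 N, L j ∈ Icc 0 (L j) := fun j hj =>
      right_mem_Icc.2 (hL j hj).le
    calc ∑ j ∈ Finset.Icc 1 N, k j * derivWithin ((φ - ψ) j) (Icc 0 (L j)) (L j)
        = ∑ j ∈ Finset.Icc 1 N, (k j * derivWithin (φ j) (Icc 0 (L j)) (L j)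
            - k j * derivWithin (ψ j) (Icc 0 (L j)) (L j)) := by
          refine Finset.sum_congr rfl fun j hj => ?_
          rw [Pi.sub_apply, derivWithin_sub
            ((hφ₂ j hj).differentiableOn two_ne_zero _ (hmem j hj))
            ((hψ₂ j hj).differentiableOn two_ne_zero _ (hmem j hj)), mul_sub]
      _ = 0 := by rw [Finset.sum_sub_distrib, hφK, hψK, sub_zero]

theorem eqOn_zero (hL : ∀ j ∈ Finset.Icc 1 N, 0 < L j) (hk : ∀ j ∈ Finset.Icc 1 N, k j ≠ 0)
    (hS : ∑ j ∈ Finset.Icc 1 N, k j / L j ≠ 0) (hw : IsStarSolutionVar N L k 0 ψ) :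
    ∀ j ∈ Finset.Icc 1 N, EqOn (ψ j) 0 (Icc 0 (L j)) := by
  obtain ⟨hw₂, hweq, hw₀, hwL, hwK⟩ := hw
  have hlin : ∀ j ∈ Finset.Icc 1 N, ∀ x ∈ Icc 0 (L j),
      derivWithin (ψ j) (Icc 0 (L j)) x = ψ 1 (L 1) / L j ∧ ψ j x = ψ 1 (L 1) / L j * x := by
    intro j hj
    rw [← hwL j hj]
    refine eqOn_linear_of_iteratedDerivWithin_two_eq_zero (hL j hj) (hw₂ j hj)
      (fun x hx => ?_) (hw₀ j hj)
    simpa [hk j hj] using hweq j hj x hx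
  have hU : ψ 1 (L 1) = 0 := by
    have hK : (∑ j ∈ Finset.Icc 1 N, k j / L j) * ψ 1 (L 1) = 0 := by
      rw [← hwK, Finset.sum_mul]
      refine Finset.sum_congr rfl fun j hj => ?_
      rw [(hlin j hj (L j) (right_mem_Icc.2 (hL j hj).le)).1]
      ring
    exact (mul_eq_zero.1 hK).resolve_left hS
  intro j hj x hx
  simp [(hlin j hj x hx).2, hU]

theorem eqOn (hL : ∀ j ∈ Finset.Icc 1 N, 0 < L j) (hk : ∀ j ∈ Finset.Icc 1 N, k j ≠ 0)
    (hS : ∑ j ∈ Finset.Icc 1 N, k j / L j ≠ 0) (hφ : IsStarSolutionVar N L k f φ)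
    (hψ : IsStarSolutionVar N L k f ψ) :
    ∀ j ∈ Finset.Icc 1 N, EqOn (φ j) (ψ j) (Icc 0 (L j)) := by
  have hw := hφ.sub hL hψ
  rw [sub_self] at hw
  exact fun j hj x hx => sub_eq_zero.1 (hw.eqOn_zero hL hk hS j hj hx)

end IsStarSolutionVar

theorem exists_isStarSolutionVar {N : ℕ} {L k : ℕ → ℝ} (hL : ∀ j ∈ Finset.Icc 1 N, 0 < L j)
    (hk : ∀ j ∈ Finset.Icc 1 N, k j ≠ 0) (hS : ∑ j ∈ Finset.Icc 1 N, k j / L j ≠ 0)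
    {f : ℕ → ℝ → ℝ} (hf : ∀ j ∈ Finset.Icc 1 N, ContinuousOn (f j) (Icc 0 (L j))) :
    ∃ ψ : ℕ → ℝ → ℝ, IsStarSolutionVar N L k f ψ := by
  -- clamping the argument extends `f j` continuously to `ℝ`
  set g : ℕ → ℝ → ℝ := fun j x => -f j (max 0 (min (L j) x)) / k j
  have hg : ∀ j ∈ Finset.Icc 1 N, Continuous (g j) := fun j hj =>
    ((hf j hj).continuous_comp_max_min (hL j hj).le).neg.div_const _
  set P : ℕ → ℝ := fun j => ∫ t in 0..L j, ∫ s in 0..t, g j s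
  set Q : ℕ → ℝ := fun j => ∫ s in 0..L j, g j s
  -- the common value at the internal vertex for which Kirchhoff's law holds
  set V : ℝ :=
    (∑ j ∈ Finset.Icc 1 N, k j * (P j / L j - Q j)) / ∑ j ∈ Finset.Icc 1 N, k j / L j
  set c : ℕ → ℝ := fun j => (V - P j) / L j
  have hV : ∀ j ∈ Finset.Icc 1 N, shootingSolution (g j) (c j) (L j) = V := fun j hj => by
    simp only [shootingSolution, c, div_mul_cancel₀ _ (hL j hj).ne', P]
    ring
  have h1 : 1 ∈ Finset.Icc 1 N := by
    obtain ⟨j, hj, -⟩ := Finset.exists_ne_zero_of_sum_ne_zero hS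
    simp only [Finset.mem_Icc] at hj ⊢
    omega
  refine ⟨fun j => shootingSolution (g j) (c j),
    fun j hj => (contDiff_shootingSolution _ (hg j hj)).contDiffOn, fun j hj x hx => ?_,
    fun j _ => shootingSolution_zero _, fun j hj => (hV j hj).trans (hV 1 h1).symm, ?_⟩
  · rw [iteratedDerivWithin_Icc_two_shootingSolution _ (hg j hj) (hL j hj) hx]
    simp only [g, min_eq_right hx.2, max_eq_right hx.1]
    field_simp [hk j hj]
  · calc ∑ j ∈ Finset.Icc 1 N,
          k j * derivWithin (shootingSolution (g j) (c j)) (Icc 0 (L j)) (L j)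
        = ∑ j ∈ Finset.Icc 1 N, (k j / L j * V - k j * (P j / L j - Q j)) := by
          refine Finset.sum_congr rfl fun j hj => ?_
          rw [derivWithin_Icc_shootingSolution _ (hg j hj) (hL j hj)
            (right_mem_Icc.2 (hL j hj).le)]
          simp only [c, Q]
          field_simp [(hL j hj).ne']
          ring
      _ = 0 := by rw [Finset.sum_sub_distrib, ← Finset.sum_mul, mul_div_cancel₀ _ hS, sub_self]

section TwoPhase

variable {N D : ℕ} {Lp Lm kp km : ℝ} {L k : ℕ → ℝ}
  (hL1 : ∀ j, 1 ≤ j → j ≤ D → L j = Lp) (hL2 : ∀ j, D < j → j ≤ N → L j = Lm)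
  (hk1 : ∀ j, 1 ≤ j → j ≤ D → k j = kp) (hk2 : ∀ j, D < j → j ≤ N → k j = km)
include hL1 hL2 hk1 hk2

theorem two_phase_cases {j : ℕ} (hj : j ∈ Finset.Icc 1 N) :
    L j = Lp ∧ k j = kp ∨ L j = Lm ∧ k j = km := by
  rw [Finset.mem_Icc] at hj
  rcases le_or_gt j D with hjD | hDj
  · exact Or.inl ⟨hL1 j hj.1 hjD, hk1 j hj.1 hjD⟩
  · exact Or.inr ⟨hL2 j hDj hj.2, hk2 j hDj hj.2⟩

theorem sum_div_two_phase (hDN : D ≤ N) :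
    ∑ j ∈ Finset.Icc 1 N, k j / L j = D * (kp / Lp) + ((N : ℝ) - D) * (km / Lm) := by
  have hIcc : Finset.Icc 1 N = Finset.Ioc 0 N := by
    ext j
    simp only [Finset.mem_Icc, Finset.mem_Ioc]
    omega
  have hp : ∀ j ∈ Finset.Ioc 0 D, k j / L j = kp / Lp := fun j hj => by
    rw [Finset.mem_Ioc] at hj
    rw [hk1 j hj.1 hj.2, hL1 j hj.1 hj.2]
  have hm : ∀ j ∈ Finset.Ioc D N, k j / L j = km / Lm := fun j hj => by
    rw [Finset.mem_Ioc] at hj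
    rw [hk2 j hj.1 hj.2, hL2 j hj.1 hj.2]
  rw [hIcc, ← Finset.sum_Ioc_consecutive _ D.zero_le hDN, Finset.sum_congr rfl hp,
    Finset.sum_congr rfl hm]
  simp [Nat.cast_sub hDN]

end TwoPhase

theorem stmt_3_general (N D : ℕ) (hDN : D < N)
    (Lp Lm : ℝ) (hLp : 0 < Lp) (hLm : 0 < Lm)
    (kp km : ℝ) (hkp : 0 < kp) (hkm : km < 0)
    (hres : |km| / kp ≠ ((D : ℝ) / Lp) * (Lm / ((N : ℝ) - (D : ℝ))))
    (L : ℕ → ℝ) (k : ℕ → ℝ)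
    (hL1 : ∀ j, 1 ≤ j → j ≤ D → L j = Lp)
    (hL2 : ∀ j, D < j → j ≤ N → L j = Lm)
    (hk1 : ∀ j, 1 ≤ j → j ≤ D → k j = kp)
    (hk2 : ∀ j, D < j → j ≤ N → k j = km)
    (f : ℕ → ℝ → ℝ) (hf : ∀ j ∈ Finset.Icc 1 N, ContinuousOn (f j) (Set.Icc 0 (L j))) :
    ∃ ψ : ℕ → ℝ → ℝ, IsStarSolutionVar N L k f ψ ∧
      ∀ φ : ℕ → ℝ → ℝ, IsStarSolutionVar N L k f φ →
        ∀ j ∈ Finset.Icc 1 N, ∀ x ∈ Set.Icc (0 : ℝ) (L j), φ j x = ψ j x := by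
  have hL : ∀ j ∈ Finset.Icc 1 N, 0 < L j := fun j hj => by
    rcases two_phase_cases hL1 hL2 hk1 hk2 hj with ⟨h, -⟩ | ⟨h, -⟩ <;> rwa [h]
  have hk : ∀ j ∈ Finset.Icc 1 N, k j ≠ 0 := fun j hj => by
    rcases two_phase_cases hL1 hL2 hk1 hk2 hj with ⟨-, h⟩ | ⟨-, h⟩ <;> rw [h]
    exacts [hkp.ne', hkm.ne]
  have hS : ∑ j ∈ Finset.Icc 1 N, k j / L j ≠ 0 := by
    rw [sum_div_two_phase hL1 hL2 hk1 hk2 hDN.le]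
    intro h
    have hND : (0 : ℝ) < N - D := sub_pos.2 (by exact_mod_cast hDN)
    apply hres
    rw [abs_of_neg hkm]
    field_simp at h ⊢
    linarith
  obtain ⟨ψ, hψ⟩ := exists_isStarSolutionVar hL hk hS hf
  exact ⟨ψ, hψ, fun φ hφ => hφ.eqOn hL hk hS hψ⟩

/-- Well-posedness for a two-phase star network with two possibly different edge lengths
and Dirichlet boundary conditions (Corollary 2.2): `D` dielectric edges of length `L⁺`
and conductivity `k⁺ > 0`, `N - D` metamaterial edges of length `L⁻` and conductivity
`k⁻ < 0`, provided `|k⁻|/k⁺ ≠ (D/L⁺)·(L⁻/(N-D))`. -/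
theorem stmt_3 (N D : ℕ) (hD : 1 ≤ D) (hDN : D < N)
    (Lp Lm : ℝ) (hLp : 0 < Lp) (hLm : 0 < Lm)
    (kp km : ℝ) (hkp : 0 < kp) (hkm : km < 0)
    (hres : |km| / kp ≠ ((D : ℝ) / Lp) * (Lm / ((N : ℝ) - (D : ℝ))))
    (L : ℕ → ℝ) (k : ℕ → ℝ)
    (hL1 : ∀ j, 1 ≤ j → j ≤ D → L j = Lp)
    (hL2 : ∀ j, D < j → j ≤ N → L j = Lm)
    (hk1 : ∀ j, 1 ≤ j → j ≤ D → k j = kp)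
    (hk2 : ∀ j, D < j → j ≤ N → k j = km)
    (f : ℕ → ℝ → ℝ) (hf : ∀ j ∈ Finset.Icc 1 N, ContinuousOn (f j) (Set.Icc 0 (L j))) :
    ∃ ψ : ℕ → ℝ → ℝ, IsStarSolutionVar N L k f ψ ∧
      ∀ φ : ℕ → ℝ → ℝ, IsStarSolutionVar N L k f φ →
        ∀ j ∈ Finset.Icc 1 N, ∀ x ∈ Set.Icc (0 : ℝ) (L j), φ j x = ψ j x :=
  stmt_3_general N D hDN Lp Lm hLp hLm kp km hkp hkm hres L k hL1 hL2 hk1 hk2 f hf
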